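/- Let λ₁, λ₂ > 0 and c > 0, and let R₁, R₂ be as in the context. Then ℙ(c R₂ ≤ R₁) = (λ₂/(c √λ₁)) · exp( λ₂²/(π λ₁ c²) ) · erfc( λ₂/(c √(π λ₁)) ). -/

import Mathlib

open MeasureTheory Real ProbabilityTheory

/-- The complementary error function `erfc(x) = (2/√π) ∫_x^∞ e^{−t²} dt`. -/
noncomputable def erfc (x : ℝ) : ℝ :=
  (2 / Real.sqrt π) * ∫ t in Set.Ioi x, Real.exp (-t ^ 2)

/-!
By independence, `ℙ(c R₂ ≤ R₁) = ∫ ℙ(R₁ ≥ c r) dℙ_{R₂}(r)`. The survival function of `R₂` says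
that `R₂` is exponential with rate `2λ₂`, and by continuity `ℙ(R₁ ≥ y) = exp(−π λ₁ y²)` for
`y > 0`, so the probability is `∫₀^∞ 2λ₂ exp(−(π λ₁ c² r² + 2λ₂ r)) dr`. Completing the square
turns this into a Gaussian tail integral, i.e. an `erfc`.
-/

open Set Filter Topology
open scoped ENNReal

theorem measure_Ici_eq_of_measure_Ioi {ν : Measure ℝ} [IsFiniteMeasure ν] {F : ℝ → ℝ≥0∞}
    {y : ℝ} (hF : ContinuousAt F y) (hν : ∀ᶠ x in 𝓝[<] y, ν (Ioi x) = F x) :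
    ν (Ici y) = F y := by
  have hInter : ⋂ r > (0 : ℝ), Ioi (y - r) = Ici y := by
    ext x
    simp only [mem_iInter, mem_Ioi, mem_Ici, sub_lt_comm]
    exact ⟨fun h => le_of_forall_pos_lt_add fun r hr => by linarith [h r hr],
      fun h r hr => by linarith⟩
  have hshift : Tendsto (fun r => y - r) (𝓝[>] 0) (𝓝[<] y) := by
    refine tendsto_nhdsWithin_iff.2 ⟨?_, eventually_mem_nhdsWithin.mono fun r hr => ?_⟩
    · exact ((continuous_const.sub continuous_id).tendsto' 0 y (sub_zero y)).mono_left
        nhdsWithin_le_nhds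
    · exact sub_lt_self y hr
  have hlim := tendsto_measure_biInter_gt (μ := ν) (s := fun r => Ioi (y - r)) (a := 0)
    (fun _ _ => measurableSet_Ioi.nullMeasurableSet)
    (fun i j _ hij => Ioi_subset_Ioi (by linarith)) ⟨1, one_pos, measure_ne_top _ _⟩
  rw [hInter] at hlim
  refine tendsto_nhds_unique hlim ?_
  exact (hF.tendsto.comp (hshift.mono_right nhdsWithin_le_nhds)).congr'
    ((hshift.eventually hν).mono fun r hr => hr.symm)

theorem map_eq_expMeasure_of_survival {Ω : Type*} [MeasurableSpace Ω] {P : Measure Ω}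
    [IsProbabilityMeasure P] {X : Ω → ℝ} (hX : Measurable X) {rate : ℝ} (hrate : 0 < rate)
    (hsurv : ∀ r, 0 ≤ r → P {ω | r < X ω} = ENNReal.ofReal (exp (-(rate * r)))) :
    P.map X = expMeasure rate := by
  have := isProbabilityMeasure_expMeasure hrate
  have := Measure.isProbabilityMeasure_map (μ := P) hX.aemeasurable
  refine Measure.eq_of_cdf _ _ ?_
  ext t
  rw [cdf_expMeasure_eq hrate, cdf_eq_real, measureReal_def, Measure.map_apply hX measurableSet_Iic]
  split_ifs with ht
  · have : X ⁻¹' Iic t = {ω | t < X ω}ᶜ := by ext; simp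
    rw [this, prob_compl_eq_one_sub (measurableSet_lt measurable_const hX), hsurv t ht,
      ENNReal.toReal_sub_of_le (by simp [exp_le_one_iff]; positivity) ENNReal.one_ne_top]
    simp [(exp_pos _).le]
  · have hpos : P {ω | 0 < X ω}ᶜ = 0 := by
      rw [prob_compl_eq_one_sub (measurableSet_lt measurable_const hX), hsurv 0 le_rfl]
      simp
    refine (ENNReal.toReal_eq_zero_iff _).2 (Or.inl (measure_mono_null (fun ω hω => ?_) hpos))
    simp only [mem_preimage, mem_Iic, mem_compl_iff, mem_ofPred_eq, not_lt] at hω ⊢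
    linarith

theorem measure_le_eq_of_survival {Ω : Type*} [MeasurableSpace Ω] {P : Measure Ω}
    [IsFiniteMeasure P] {X : Ω → ℝ} (hX : Measurable X) {F : ℝ → ℝ≥0∞} (hF : Continuous F)
    (hsurv : ∀ r, 0 ≤ r → P {ω | r < X ω} = F r) {y : ℝ} (hy : 0 < y) :
    P {ω | y ≤ X ω} = F y := by
  have hIoi : ∀ᶠ x in 𝓝[<] y, P.map X (Ioi x) = F x :=
    ((eventually_gt_nhds hy).filter_mono nhdsWithin_le_nhds).mono fun x hx => by
      rw [Measure.map_apply hX measurableSet_Ioi]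
      exact hsurv x hx.le
  have := measure_Ici_eq_of_measure_Ioi hF.continuousAt hIoi
  rwa [Measure.map_apply hX measurableSet_Ici] at this

theorem lintegral_expMeasure {rate : ℝ} (g : ℝ → ℝ≥0∞) :
    ∫⁻ x, g x ∂expMeasure rate
      = ∫⁻ x in Ioi 0, ENNReal.ofReal (rate * exp (-(rate * x))) * g x := by
  change ∫⁻ x, g x ∂volume.withDensity (exponentialPDF rate) = _
  rw [lintegral_withDensity_eq_lintegral_mul_non_measurable _ (f := exponentialPDF rate)
    (measurable_exponentialPDFReal rate).ennreal_ofReal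
    (ae_of_all _ fun _ => ENNReal.ofReal_lt_top),
    ← setLIntegral_eq_of_support_subset (s := Ici 0), setLIntegral_congr Ioi_ae_eq_Ici.symm]
  · refine setLIntegral_congr_fun measurableSet_Ioi fun x hx => ?_
    rw [Pi.mul_apply, exponentialPDF_of_nonneg (le_of_lt hx)]
  · refine Function.support_subset_iff'.2 fun x hx => ?_
    rw [Pi.mul_apply, exponentialPDF_of_neg (not_le.1 hx), zero_mul]

theorem ProbabilityTheory.IndepFun.measure_le_eq_lintegral {Ω : Type*} [MeasurableSpace Ω]
    {P : Measure Ω} [IsFiniteMeasure P] {X Y : Ω → ℝ} (hX : Measurable X) (hY : Measurable Y)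
    (hXY : IndepFun X Y P) {f : ℝ → ℝ} (hf : Measurable f) :
    P {ω | f (X ω) ≤ Y ω} = ∫⁻ x, P {ω | f x ≤ Y ω} ∂P.map X := by
  have hS : MeasurableSet {p : ℝ × ℝ | f p.1 ≤ p.2} :=
    measurableSet_le (hf.comp measurable_fst) measurable_snd
  calc P {ω | f (X ω) ≤ Y ω} = P.map (fun ω => (X ω, Y ω)) {p | f p.1 ≤ p.2} :=
        (Measure.map_apply (hX.prodMk hY) hS).symm
    _ = ((P.map X).prod (P.map Y)) {p | f p.1 ≤ p.2} := by
        rw [(indepFun_iff_map_prod_eq_prod_map_map hX.aemeasurable hY.aemeasurable).1 hXY]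
    _ = ∫⁻ x, P {ω | f x ≤ Y ω} ∂P.map X := by
        rw [Measure.prod_apply hS]
        exact lintegral_congr fun x => Measure.map_apply hY (measurableSet_Ici (a := f x))

theorem exp_neg_quadratic_eq_mul_exp_neg_sq {a : ℝ} (ha : 0 < a) (b r : ℝ) :
    exp (-(a * r ^ 2 + b * r)) = exp (b ^ 2 / (4 * a)) * exp (-(√a * r + b / (2 * √a)) ^ 2) := by
  have hs : 0 < √a := sqrt_pos.2 ha
  rw [← exp_add]
  congr 1
  field_simp
  rw [sq_sqrt ha.le]
  ring

theorem integrable_exp_neg_quadratic {a : ℝ} (ha : 0 < a) (b : ℝ) :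
    Integrable fun r => exp (-(a * r ^ 2 + b * r)) := by
  have hg : Integrable fun t => exp (-t ^ 2) := by
    simpa using integrable_exp_neg_mul_sq one_pos
  simp_rw [exp_neg_quadratic_eq_mul_exp_neg_sq ha]
  exact ((hg.comp_add_right _).comp_mul_left' (sqrt_pos.2 ha).ne').const_mul _

theorem integral_Ioi_exp_neg_sq_mul_add {s : ℝ} (hs : 0 < s) (d : ℝ) :
    ∫ r in Ioi 0, exp (-(s * r + d) ^ 2) = s⁻¹ * ∫ t in Ioi d, exp (-t ^ 2) := by
  have hshift : ∫ r in Ioi 0, exp (-(r + d) ^ 2) = ∫ t in Ioi d, exp (-t ^ 2) := by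
    have := (measurePreserving_add_right volume d).setIntegral_preimage_emb
      (measurableEmbedding_addRight d) (fun t => exp (-t ^ 2)) (Ioi d)
    rwa [preimage_add_const_Ioi, sub_self] at this
  have := integral_comp_mul_left_Ioi (fun r => exp (-(r + d) ^ 2)) 0 hs
  rwa [mul_zero, smul_eq_mul, hshift] at this

theorem integral_Ioi_exp_neg_quadratic {a : ℝ} (ha : 0 < a) (b : ℝ) :
    ∫ r in Ioi 0, exp (-(a * r ^ 2 + b * r))
      = √π / (2 * √a) * exp (b ^ 2 / (4 * a)) * erfc (b / (2 * √a)) := by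
  have : 0 < √π := sqrt_pos.2 pi_pos
  simp_rw [exp_neg_quadratic_eq_mul_exp_neg_sq ha]
  rw [integral_const_mul, integral_Ioi_exp_neg_sq_mul_add (sqrt_pos.2 ha), erfc]
  field_simp

theorem prob_assoc_tier_two_general {Ω : Type*} [MeasurableSpace Ω]
    (P : Measure Ω) [IsProbabilityMeasure P]
    (R₁ R₂ : Ω → ℝ) (hR₁ : Measurable R₁) (hR₂ : Measurable R₂)
    (hindep : IndepFun R₁ R₂ P)
    (lam₁ lam₂ c : ℝ) (hlam₁ : 0 < lam₁) (hlam₂ : 0 < lam₂) (hc : 0 < c)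
    (hsurv₁ : ∀ r : ℝ, 0 ≤ r →
      P {ω | r < R₁ ω} = ENNReal.ofReal (Real.exp (-(π * lam₁ * r ^ 2))))
    (hsurv₂ : ∀ r : ℝ, 0 ≤ r →
      P {ω | r < R₂ ω} = ENNReal.ofReal (Real.exp (-(2 * lam₂ * r)))) :
    P {ω | c * R₂ ω ≤ R₁ ω}
      = ENNReal.ofReal ((lam₂ / (c * Real.sqrt lam₁)) *
          Real.exp (lam₂ ^ 2 / (π * lam₁ * c ^ 2)) *
          erfc (lam₂ / (c * Real.sqrt (π * lam₁)))) := by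
  have hlaw₂ : P.map R₂ = expMeasure (2 * lam₂) :=
    map_eq_expMeasure_of_survival hR₂ (by positivity) hsurv₂
  have hlaw₁ : ∀ r ∈ Ioi (0 : ℝ),
      P {ω | c * r ≤ R₁ ω} = ENNReal.ofReal (exp (-(π * lam₁ * (c * r) ^ 2))) := fun r hr =>
    measure_le_eq_of_survival hR₁ (ENNReal.continuous_ofReal.comp (by fun_prop)) hsurv₁
      (mul_pos hc hr)
  set a := π * lam₁ * c ^ 2 with ha_def
  have ha : 0 < a := by positivity
  calc P {ω | c * R₂ ω ≤ R₁ ω} = ∫⁻ r, P {ω | c * r ≤ R₁ ω} ∂P.map R₂ :=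
        hindep.symm.measure_le_eq_lintegral hR₂ hR₁ (measurable_const_mul c)
    _ = ∫⁻ r in Ioi 0,
          ENNReal.ofReal (2 * lam₂ * exp (-(2 * lam₂ * r))) * P {ω | c * r ≤ R₁ ω} := by
        rw [hlaw₂, lintegral_expMeasure]
    _ = ∫⁻ r in Ioi 0, ENNReal.ofReal (2 * lam₂ * exp (-(a * r ^ 2 + 2 * lam₂ * r))) := by
        refine setLIntegral_congr_fun measurableSet_Ioi fun r hr => ?_
        rw [hlaw₁ r hr, ← ENNReal.ofReal_mul (by positivity), mul_assoc, ← exp_add, ha_def]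
        ring_nf
    _ = ENNReal.ofReal (2 * lam₂ * ∫ r in Ioi 0, exp (-(a * r ^ 2 + 2 * lam₂ * r))) := by
        rw [← integral_const_mul, ofReal_integral_eq_lintegral_ofReal
          ((integrable_exp_neg_quadratic ha _).integrableOn.const_mul _)
          (ae_of_all _ fun r => by positivity)]
    _ = _ := by
        have hsqrt : √(π * lam₁) = √π * √lam₁ := sqrt_mul pi_pos.le _
        have hsqrt_a : √a = c * (√π * √lam₁) := by
          rw [ha_def, sqrt_mul (by positivity), sqrt_sq hc.le, hsqrt, mul_comm]
        rw [integral_Ioi_exp_neg_quadratic ha, hsqrt_a, hsqrt]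
        field_simp
        ring_nf

/-- Association probability with a tier 2 node: if `R₁, R₂` are independent nonnegative random
variables with `ℙ(R₁ > r) = exp(−π λ₁ r²)` and `ℙ(R₂ > r) = exp(−2 λ₂ r)` for `r ≥ 0`, then
`ℙ(c R₂ ≤ R₁) = (λ₂/(c √λ₁)) e^{λ₂²/(π λ₁ c²)} erfc(λ₂/(c √(π λ₁)))`. -/
theorem prob_assoc_tier_two {Ω : Type*} [MeasurableSpace Ω]
    (P : Measure Ω) [IsProbabilityMeasure P]
    (R₁ R₂ : Ω → ℝ) (hR₁ : Measurable R₁) (hR₂ : Measurable R₂)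
    (hindep : IndepFun R₁ R₂ P)
    (hR₁_nonneg : ∀ ω, 0 ≤ R₁ ω) (hR₂_nonneg : ∀ ω, 0 ≤ R₂ ω)
    (lam₁ lam₂ c : ℝ) (hlam₁ : 0 < lam₁) (hlam₂ : 0 < lam₂) (hc : 0 < c)
    (hsurv₁ : ∀ r : ℝ, 0 ≤ r →
      P {ω | r < R₁ ω} = ENNReal.ofReal (Real.exp (-(π * lam₁ * r ^ 2))))
    (hsurv₂ : ∀ r : ℝ, 0 ≤ r →
      P {ω | r < R₂ ω} = ENNReal.ofReal (Real.exp (-(2 * lam₂ * r)))) :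
    P {ω | c * R₂ ω ≤ R₁ ω}
      = ENNReal.ofReal ((lam₂ / (c * Real.sqrt lam₁)) *
          Real.exp (lam₂ ^ 2 / (π * lam₁ * c ^ 2)) *
          erfc (lam₂ / (c * Real.sqrt (π * lam₁)))) :=
  prob_assoc_tier_two_general P R₁ R₂ hR₁ hR₂ hindep lam₁ lam₂ c hlam₁ hlam₂ hc hsurv₁ hsurv₂
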